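/- arXiv:math/0508475 — 3 statements merged into one kernel-verified Lean document; each statement's English description precedes it below -/
import Mathlib

section
/- Let b: ℝ → ℝ be a continuous function supported in [-1/2, 1] such that b(t) = 1 on [0, 1/2] and b(t)² + b(t-1)² = 1 on [1/2, 1]. Let c₀ = ‖b‖_{L²(ℝ)} and for c > 0 and k ∈ ℤ define g_{k,c}(t) = c₀^{-1} c^{1/2} b(ct) e^{2π i k c t}. Then {g_{k,c}}_{k ∈ ℤ} is an orthonormal family in L²(ℝ). -/
open Real Complex MeasureTheory

/-- The Lemarié–Meyer type generator: `g_{k,c}(t) = c₀⁻¹ c^{1/2} b(ct) e^{2πikct}`,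
where `c₀ = ‖b‖_{L²(ℝ)}`. -/
noncomputable def lemarieMeyer (b : ℝ → ℝ) (c : ℝ) (k : ℤ) (t : ℝ) : ℂ :=
  (((Real.sqrt (∫ s : ℝ, b s ^ 2))⁻¹ * Real.sqrt c * b (c * t) : ℝ) : ℂ) *
    Complex.exp (2 * π * k * c * t * Complex.I)

lemma lm_zero_left {b : ℝ → ℝ} (hb : Continuous b) {a : ℝ}
    (h : ∀ t < a, b t = 0) : b a = 0 := by
  have h1 : Filter.Tendsto b (nhdsWithin a (Set.Iio a)) (nhds (b a)) :=
    (hb.tendsto a).mono_left nhdsWithin_le_nhds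
  have h2 : Filter.Tendsto b (nhdsWithin a (Set.Iio a)) (nhds 0) := by
    apply Filter.Tendsto.congr' _ tendsto_const_nhds
    filter_upwards [self_mem_nhdsWithin] with t ht using (h t ht).symm
  exact tendsto_nhds_unique h1 h2

lemma lm_zero_right {b : ℝ → ℝ} (hb : Continuous b) {a : ℝ}
    (h : ∀ t, a < t → b t = 0) : b a = 0 := by
  have h1 : Filter.Tendsto b (nhdsWithin a (Set.Ioi a)) (nhds (b a)) :=
    (hb.tendsto a).mono_left nhdsWithin_le_nhds
  have h2 : Filter.Tendsto b (nhdsWithin a (Set.Ioi a)) (nhds 0) := by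
    apply Filter.Tendsto.congr' _ tendsto_const_nhds
    filter_upwards [self_mem_nhdsWithin] with t ht using (h t ht).symm
  exact tendsto_nhds_unique h1 h2

/-- The key cancellation: for a nonzero integer frequency, the integral vanishes. -/
lemma lm_key (b : ℝ → ℝ) (hb : Continuous b)
    (hbz : ∀ t : ℝ, t ∉ Set.Ioo (-(1/2) : ℝ) 1 → b t = 0)
    (hone : ∀ t ∈ Set.Icc (0:ℝ) (1/2), b t = 1)
    (hsq : ∀ t ∈ Set.Icc ((1:ℝ)/2) 1, b t ^ 2 + b (t - 1) ^ 2 = 1)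
    (n : ℤ) (hn : n ≠ 0) :
    (∫ s : ℝ, ((b s ^ 2 : ℝ) : ℂ) * Complex.exp (2 * π * n * s * Complex.I)) = 0 := by
  set F : ℝ → ℂ := fun s => ((b s ^ 2 : ℝ) : ℂ) * Complex.exp (2 * π * n * s * Complex.I)
    with hF
  have hFc : Continuous F := by
    apply Continuous.mul
    · exact Complex.continuous_ofReal.comp (hb.pow 2)
    · exact Complex.continuous_exp.comp (by fun_prop)
  have hFsupp : Function.support F ⊆ Set.Ioc (-(1/2) : ℝ) 1 := by
    intro s hs
    by_contra hcon
    apply hs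
    have hb0 : b s = 0 := hbz s (fun h => hcon ⟨h.1, h.2.le⟩)
    simp [hF, hb0]
  have hIoc : (∫ x in (-(1/2) : ℝ)..1, F x) = ∫ s : ℝ, F s :=
    intervalIntegral.integral_eq_integral_of_support_subset hFsupp
  rw [← hIoc]
  have hii : ∀ a b : ℝ, IntervalIntegrable F volume a b :=
    fun a b => hFc.intervalIntegrable a b
  have hsplit1 : (∫ x in (-(1/2) : ℝ)..0, F x) + (∫ x in (0:ℝ)..1, F x)
      = ∫ x in (-(1/2) : ℝ)..1, F x :=
    intervalIntegral.integral_add_adjacent_intervals (hii _ _) (hii _ _)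
  -- shift the left piece
  have hshift : (∫ x in ((1:ℝ)/2)..1, F (x - 1)) = ∫ x in (-(1/2) : ℝ)..0, F x := by
    have := intervalIntegral.integral_comp_sub_right (a := (1:ℝ)/2) (b := 1) F 1
    rw [this]
    norm_num
  have hEper : ∀ x : ℝ, Complex.exp (2 * π * n * ((x : ℂ) - 1) * Complex.I)
      = Complex.exp (2 * π * n * x * Complex.I) := by
    intro x
    have h1 : (2 * (π:ℂ) * n * ((x : ℂ) - 1) * Complex.I)
        = 2 * π * n * x * Complex.I + ((-n : ℤ) : ℂ) * (2 * π * Complex.I) := by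
      push_cast; ring
    rw [h1, Complex.exp_add, Complex.exp_int_mul_two_pi_mul_I, mul_one]
  have hFshift : ∀ x : ℝ, F (x - 1)
      = ((b (x - 1) ^ 2 : ℝ) : ℂ) * Complex.exp (2 * π * n * x * Complex.I) := by
    intro x
    simp only [hF]
    rw [show ((x - 1 : ℝ) : ℂ) = (x : ℂ) - 1 by push_cast; ring, hEper x]
  -- the pure exponential integrals
  set E : ℝ → ℂ := fun x => Complex.exp (2 * π * n * x * Complex.I) with hE
  have hcne : (2 * (π:ℂ) * n * Complex.I) ≠ 0 := by
    simp [Real.pi_ne_zero, Complex.I_ne_zero, Complex.ofReal_ne_zero, hn]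
  have hEint : ∀ a b : ℝ, (∫ x in a..b, E x)
      = (Complex.exp (2 * π * n * b * Complex.I)
        - Complex.exp (2 * π * n * a * Complex.I)) / (2 * π * n * Complex.I) := by
    intro a b
    have h1 : (∫ x in a..b, E x) = ∫ x in a..b, Complex.exp ((2 * π * n * Complex.I) * x) := by
      apply intervalIntegral.integral_congr
      intro x _
      simp only [hE]
      ring_nf
    rw [h1, integral_exp_mul_complex hcne]
    congr 2 <;> ring
  -- middle piece : on [0, 1/2], b = 1
  have hmid : (∫ x in (0:ℝ)..(1/2), F x) = ∫ x in (0:ℝ)..(1/2), E x := by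
    apply intervalIntegral.integral_congr
    intro x hx
    rw [Set.uIcc_of_le (by norm_num : (0:ℝ) ≤ 1/2)] at hx
    simp only [hF, hE, hone x hx]
    norm_num
  have hsplit2 : (∫ x in (0:ℝ)..(1/2), F x) + (∫ x in ((1:ℝ)/2)..1, F x)
      = ∫ x in (0:ℝ)..1, F x := by
    have := intervalIntegral.integral_add_adjacent_intervals
      (a := (0:ℝ)) (b := 1/2) (c := 1) (hii _ _) (hii _ _)
    convert this using 2 <;> norm_num
  -- right pieces combine
  have hFsc : Continuous fun x : ℝ => ((b (x - 1) ^ 2 : ℝ) : ℂ)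
      * Complex.exp (2 * π * n * x * Complex.I) := by
    apply Continuous.mul
    · exact Complex.continuous_ofReal.comp ((hb.comp (by fun_prop)).pow 2)
    · exact Complex.continuous_exp.comp (by fun_prop)
  have hright : (∫ x in ((1:ℝ)/2)..1, F (x - 1)) + (∫ x in ((1:ℝ)/2)..1, F x)
      = ∫ x in ((1:ℝ)/2)..1, E x := by
    have hadd : (∫ x in ((1:ℝ)/2)..1, F (x - 1)) + (∫ x in ((1:ℝ)/2)..1, F x)
        = ∫ x in ((1:ℝ)/2)..1, (F (x - 1) + F x) := by
      rw [← intervalIntegral.integral_add]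
      · exact (hFc.comp (by fun_prop : Continuous fun x : ℝ => x - 1)).intervalIntegrable _ _
      · exact hii _ _
    rw [hadd]
    apply intervalIntegral.integral_congr
    intro x hx
    rw [Set.uIcc_of_le (by norm_num : (1:ℝ)/2 ≤ 1)] at hx
    show F (x - 1) + F x = E x
    rw [hFshift x]
    simp only [hF, hE]
    rw [← add_mul]
    have : ((b (x - 1) ^ 2 : ℝ) : ℂ) + ((b x ^ 2 : ℝ) : ℂ) = 1 := by
      norm_cast
      rw [add_comm]
      exact hsq x hx
    rw [this, one_mul]
  -- put it all together
  rw [← hsplit1, ← hshift, ← hsplit2]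
  have : (∫ x in ((1:ℝ)/2)..1, F (x - 1))
      + ((∫ x in (0:ℝ)..(1/2), F x) + ∫ x in ((1:ℝ)/2)..1, F x)
      = (∫ x in (0:ℝ)..(1/2), E x) + ∫ x in ((1:ℝ)/2)..1, E x := by
    rw [hmid]
    rw [show (∫ x in ((1:ℝ)/2)..1, F (x - 1))
        + ((∫ x in (0:ℝ)..(1/2), E x) + ∫ x in ((1:ℝ)/2)..1, F x)
        = (∫ x in (0:ℝ)..(1/2), E x)
          + ((∫ x in ((1:ℝ)/2)..1, F (x - 1)) + ∫ x in ((1:ℝ)/2)..1, F x) by ring]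
    rw [hright]
  rw [this, hEint, hEint]
  have e0 : Complex.exp (2 * π * n * (0:ℝ) * Complex.I) = 1 := by
    norm_num
  have e1 : Complex.exp (2 * π * n * (1:ℝ) * Complex.I) = 1 := by
    have : (2 * (π:ℂ) * n * ((1:ℝ):ℂ) * Complex.I) = (n : ℂ) * (2 * π * Complex.I) := by
      push_cast; ring
    rw [this, Complex.exp_int_mul_two_pi_mul_I]
  rw [e0, e1]
  ring

theorem lemarieMeyer_orthonormal (b : ℝ → ℝ) (hb : Continuous b)
    (hsupp : Function.support b ⊆ Set.Icc (-(1/2) : ℝ) 1)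
    (hone : ∀ t ∈ Set.Icc (0:ℝ) (1/2), b t = 1)
    (hsq : ∀ t ∈ Set.Icc ((1:ℝ)/2) 1, b t ^ 2 + b (t - 1) ^ 2 = 1)
    (c : ℝ) (hc : 0 < c) :
    ∀ k k' : ℤ,
      (∫ t : ℝ, starRingEnd ℂ (lemarieMeyer b c k t) * lemarieMeyer b c k' t)
        = if k = k' then 1 else 0 := by
  -- b vanishes outside the open interval
  have hout : ∀ t : ℝ, t < -(1/2) ∨ 1 < t → b t = 0 := by
    intro t ht
    by_contra h
    have := hsupp h
    rcases ht with h1 | h1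
    · exact absurd this.1 (not_le.mpr h1)
    · exact absurd this.2 (not_le.mpr h1)
  have hbl : b (-(1/2)) = 0 := lm_zero_left hb (fun t ht => hout t (Or.inl ht))
  have hbr : b 1 = 0 := lm_zero_right hb (fun t ht => hout t (Or.inr ht))
  have hbz : ∀ t : ℝ, t ∉ Set.Ioo (-(1/2) : ℝ) 1 → b t = 0 := by
    intro t ht
    rcases lt_trichotomy t (-(1/2)) with h | h | h
    · exact hout t (Or.inl h)
    · rw [h]; exact hbl
    · rcases lt_trichotomy t 1 with h2 | h2 | h2
      · exact absurd ⟨h, h2⟩ ht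
      · rw [h2]; exact hbr
      · exact hout t (Or.inr h2)
  set c₀sq : ℝ := ∫ s : ℝ, b s ^ 2 with hc₀sq
  -- positivity of c₀sq
  have hcs : HasCompactSupport b := by
    apply HasCompactSupport.intro isCompact_Icc
    intro t ht
    exact hbz t (fun h => ht ⟨h.1.le, h.2.le⟩)
  have hcs2 : HasCompactSupport fun s => b s ^ 2 := by
    apply HasCompactSupport.intro (K := Set.Icc (-(1/2) : ℝ) 1) isCompact_Icc
    intro t ht
    rw [hbz t (fun h => ht ⟨h.1.le, h.2.le⟩)]
    norm_num
  have hint2 : Integrable (fun s => b s ^ 2) volume :=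
    (hb.pow 2).integrable_of_hasCompactSupport hcs2
  have hpos : 0 < c₀sq := by
    have h1 : (∫ s in Set.Icc (0:ℝ) (1/2), b s ^ 2) = 1/2 := by
      rw [MeasureTheory.setIntegral_congr_fun measurableSet_Icc
        (g := fun _ => (1:ℝ)) (fun x hx => by rw [hone x hx]; norm_num)]
      simp [Real.volume_Icc]
    have h2 : (∫ s in Set.Icc (0:ℝ) (1/2), b s ^ 2) ≤ c₀sq :=
      MeasureTheory.setIntegral_le_integral hint2
        (Filter.Eventually.of_forall fun x => sq_nonneg _)
    rw [h1] at h2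
    linarith
  intro k k'
  set n : ℤ := k' - k with hn
  set A : ℝ := ((Real.sqrt c₀sq)⁻¹) ^ 2 * c with hA
  set G : ℝ → ℂ :=
    fun s => ((b s ^ 2 : ℝ) : ℂ) * Complex.exp (2 * π * (n : ℂ) * s * Complex.I) with hG
  -- pointwise formula for the integrand
  have hpt : ∀ t : ℝ,
      starRingEnd ℂ (lemarieMeyer b c k t) * lemarieMeyer b c k' t = (A : ℂ) * G (c * t) := by
    intro t
    unfold lemarieMeyer
    rw [map_mul, Complex.conj_ofReal, ← Complex.exp_conj]
    have hconj : (starRingEnd ℂ) (2 * (π:ℂ) * (k:ℂ) * (c:ℂ) * (t:ℂ) * Complex.I)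
        = -(2 * (π:ℂ) * (k:ℂ) * (c:ℂ) * (t:ℂ) * Complex.I) := by
      simp only [map_mul, Complex.conj_ofReal, Complex.conj_I, map_ofNat, map_intCast]
      ring
    rw [hconj]
    rw [mul_mul_mul_comm]
    have hr : (((Real.sqrt c₀sq)⁻¹ * Real.sqrt c * b (c * t) : ℝ) : ℂ)
        * (((Real.sqrt c₀sq)⁻¹ * Real.sqrt c * b (c * t) : ℝ) : ℂ)
        = ((A : ℝ) : ℂ) * ((b (c * t) ^ 2 : ℝ) : ℂ) := by
      norm_cast
      rw [hA]
      linear_combination ((Real.sqrt c₀sq)⁻¹ ^ 2 * b (c * t) ^ 2) * Real.sq_sqrt hc.le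
    rw [hr, mul_assoc]
    congr 1
    rw [hG]
    congr 1
    rw [← Complex.exp_add]
    congr 1
    push_cast [hn]
    ring
  simp only [hpt]
  rw [MeasureTheory.integral_const_mul]
  rw [MeasureTheory.Measure.integral_comp_mul_left G c]
  rw [abs_of_pos (inv_pos.mpr hc)]
  rw [Complex.real_smul]
  by_cases hkk : k = k'
  · rw [if_pos hkk]
    have hn0 : n = 0 := by rw [hn, hkk, sub_self]
    have hG1 : ∀ s : ℝ, G s = ((b s ^ 2 : ℝ) : ℂ) := by
      intro s
      simp [hG, hn0]
    simp only [hG1]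
    have hOR : (∫ y : ℝ, ((b y ^ 2 : ℝ) : ℂ)) = (((∫ y : ℝ, b y ^ 2) : ℝ) : ℂ) :=
      _root_.integral_ofReal (𝕜 := ℂ) (μ := (volume : Measure ℝ)) (f := fun y => b y ^ 2)
    rw [hOR, ← hc₀sq]
    norm_cast
    rw [hA, inv_pow, Real.sq_sqrt hpos.le]
    field_simp
  · rw [if_neg hkk]
    have hnne : n ≠ 0 := by
      rw [hn]
      exact sub_ne_zero.mpr (Ne.symm hkk)
    have := lm_key b hb hbz hone hsq n hnne
    rw [hG, this]
    simp
end

section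
/- Let b: ℝ → ℝ be continuous with support in [-1/2, 1], b ≡ 1 on [0, 1/2], and b(t)² + b(t-1)² = 1 on [1/2, 1]. Then for any integers k ≠ k', ∫_ℝ b(t)² e^{2π i (k - k') t} dt = 0. -/
open Real Complex MeasureTheory intervalIntegral

theorem wavelet_orthogonality_integral (b : ℝ → ℝ) (hb : Continuous b)
    (hsupp : Function.support b ⊆ Set.Icc (-(1/2) : ℝ) 1)
    (hone : ∀ t ∈ Set.Icc (0:ℝ) (1/2), b t = 1)
    (hsq : ∀ t ∈ Set.Icc ((1:ℝ)/2) 1, b t ^ 2 + b (t - 1) ^ 2 = 1)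
    (k k' : ℤ) (hkk' : k ≠ k') :
    ∫ t : ℝ, ((b t ^ 2 : ℝ) : ℂ) * Complex.exp (2 * π * (k - k') * t * Complex.I) = 0 := by
  set m : ℤ := k - k' with hm
  have hm0 : (m : ℂ) ≠ 0 := by
    exact_mod_cast sub_ne_zero.mpr (by exact_mod_cast hkk')
  set e : ℝ → ℂ := fun t => Complex.exp (2 * π * (m : ℂ) * t * Complex.I) with he
  set f : ℝ → ℂ := fun t => ((b t ^ 2 : ℝ) : ℂ) * e t with hf
  have hec : Continuous e := by
    fun_prop
  have hfc : Continuous f := by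
    fun_prop
  -- periodicity of e
  have hper : ∀ t : ℝ, e (t - 1) = e t := by
    intro t
    simp only [he]
    have harg : (2:ℂ) * π * (m:ℂ) * ((t - 1 : ℝ) : ℂ) * Complex.I
        = 2 * π * (m:ℂ) * t * Complex.I + ((-m : ℤ) : ℂ) * (2 * π * Complex.I) := by
      push_cast; ring
    rw [harg, Complex.exp_add, Complex.exp_int_mul_two_pi_mul_I, mul_one]
  -- reduce to interval integral
  have hsub : Function.support f ⊆ Set.Icc (-(1/2) : ℝ) 1 := by
    intro t ht
    apply hsupp
    intro hbt
    apply ht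
    simp [hf, hbt]
  have h1 : ∫ t : ℝ, f t = ∫ t in (-(1/2) : ℝ)..1, f t := by
    rw [intervalIntegral.integral_of_le (by norm_num), ← MeasureTheory.integral_Icc_eq_integral_Ioc]
    exact (setIntegral_eq_integral_of_ae_compl_eq_zero
      (Filter.Eventually.of_forall fun x hx => by
        by_contra h; exact hx (hsub h))).symm
  -- split
  have hAB : ∫ t in (-(1/2) : ℝ)..1, f t
      = (∫ t in (-(1/2) : ℝ)..0, f t) + ∫ t in (0:ℝ)..1, f t :=
    (intervalIntegral.integral_add_adjacent_intervals
      (hfc.intervalIntegrable _ _) (hfc.intervalIntegrable _ _)).symm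
  -- shift the first piece
  have hA : (∫ t in (-(1/2) : ℝ)..0, f t) = ∫ t in ((1:ℝ)/2)..1, f (t - 1) := by
    rw [intervalIntegral.integral_comp_sub_right (fun x => f x) 1]
    norm_num
  -- on [1/2,1], f(t-1) + f t = e t
  have hmid : (∫ t in ((1:ℝ)/2)..1, f (t - 1)) + (∫ t in ((1:ℝ)/2)..1, f t)
      = ∫ t in ((1:ℝ)/2)..1, e t := by
    rw [← intervalIntegral.integral_add
      ((Continuous.intervalIntegrable (by fun_prop) _ _ :
        IntervalIntegrable (fun t => f (t - 1)) volume (1/2) 1))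
      (hfc.intervalIntegrable _ _)]
    apply intervalIntegral.integral_congr
    intro t ht
    rw [Set.uIcc_of_le (by norm_num)] at ht
    have := hsq t ht
    simp only [hf]
    rw [hper t]
    have : ((b (t-1) ^ 2 : ℝ) : ℂ) + ((b t ^ 2 : ℝ) : ℂ) = 1 := by
      rw [← Complex.ofReal_add]
      norm_cast
      linarith [hsq t ht]
    rw [← add_mul, this, one_mul]
  -- on [0,1/2], f = e
  have hlow : (∫ t in (0:ℝ)..(1/2), f t) = ∫ t in (0:ℝ)..(1/2), e t := by
    apply intervalIntegral.integral_congr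
    intro t ht
    rw [Set.uIcc_of_le (by norm_num)] at ht
    simp [hf, hone t ht]
  have hB : (∫ t in (0:ℝ)..1, f t)
      = (∫ t in (0:ℝ)..(1/2), f t) + ∫ t in ((1:ℝ)/2)..1, f t :=
    (intervalIntegral.integral_add_adjacent_intervals
      (hfc.intervalIntegrable _ _) (hfc.intervalIntegrable _ _)).symm
  -- total integral of e over [0,1]
  have hEtot : (∫ t in (0:ℝ)..(1/2), e t) + (∫ t in ((1:ℝ)/2)..1, e t)
      = ∫ t in (0:ℝ)..1, e t :=
    intervalIntegral.integral_add_adjacent_intervals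
      (hec.intervalIntegrable _ _) (hec.intervalIntegrable _ _)
  have hE : (∫ t in (0:ℝ)..1, e t) = 0 := by
    have : ∀ t : ℝ, e t = Complex.exp ((2 * π * (m : ℂ) * Complex.I) * t) := by
      intro t; simp only [he]; ring_nf
    simp_rw [this]
    rw [integral_exp_mul_complex (by
      simp [Real.pi_ne_zero, hm0, Complex.I_ne_zero])]
    rw [Complex.ofReal_one, Complex.ofReal_zero, mul_one, mul_zero, Complex.exp_zero]
    rw [show (2:ℂ) * π * m * Complex.I = m * (2 * π * Complex.I) by ring]
    rw [Complex.exp_int_mul_two_pi_mul_I]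
    simp
  have hcast : ∀ t : ℝ, ((b t ^ 2 : ℝ) : ℂ) * Complex.exp (2 * π * ((k:ℂ) - k') * t * Complex.I) = f t := by
    intro t
    simp only [hf, he, hm]
    push_cast
    ring_nf
  simp only [hcast]
  rw [h1, hAB, hA, hB]
  rw [show (∫ t in ((1:ℝ)/2)..1, f (t - 1)) + ((∫ t in (0:ℝ)..(1/2), f t) + ∫ t in ((1:ℝ)/2)..1, f t)
      = (∫ t in (0:ℝ)..(1/2), f t) + ((∫ t in ((1:ℝ)/2)..1, f (t - 1)) + ∫ t in ((1:ℝ)/2)..1, f t) by ring]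
  rw [hmid, hlow, hEtot, hE]
end

section
/- Let T₁: H₁ → H₂ and T₃: H₂ → H₃ be compact operators between Hilbert spaces. Then for all j, k ≥ 0, the singular values satisfy λ_{j+k+1}(T₃ ∘ T₁) ≤ λ_{j+1}(T₁) · λ_{k+1}(T₃). -/
variable {H₁ H₂ H₃ : Type*}
  [NormedAddCommGroup H₁] [InnerProductSpace ℂ H₁] [CompleteSpace H₁]
  [NormedAddCommGroup H₂] [InnerProductSpace ℂ H₂] [CompleteSpace H₂]
  [NormedAddCommGroup H₃] [InnerProductSpace ℂ H₃] [CompleteSpace H₃]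

/-- The `(n+1)`-st singular value of an operator `T`, via the min-max formula
`λ_{n+1}(T) = inf_{g₁,…,g_n} sup { ‖Tf‖ : f ⟂ g₁,…,g_n, ‖f‖ = 1 }`. -/
noncomputable def singularValue {E F : Type*} [NormedAddCommGroup E] [InnerProductSpace ℂ E]
    [NormedAddCommGroup F] [InnerProductSpace ℂ F] (T : E →L[ℂ] F) (n : ℕ) : ℝ :=
  sInf { r : ℝ | ∃ g : Fin n → E,
    r = sSup { s : ℝ | ∃ f : E, (∀ i, (inner ℂ (g i) f : ℂ) = 0) ∧ ‖f‖ = 1 ∧ s = ‖T f‖ } }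

section aux

variable {E F : Type*} [NormedAddCommGroup E] [InnerProductSpace ℂ E]
    [NormedAddCommGroup F] [InnerProductSpace ℂ F]

private lemma supSet_bddAbove (T : E →L[ℂ] F) {n : ℕ} (g : Fin n → E) :
    BddAbove { s : ℝ | ∃ f : E, (∀ i, (inner ℂ (g i) f : ℂ) = 0) ∧ ‖f‖ = 1 ∧ s = ‖T f‖ } := by
  refine ⟨‖T‖, ?_⟩
  rintro s ⟨f, -, hf, rfl⟩
  calc ‖T f‖ ≤ ‖T‖ * ‖f‖ := T.le_opNorm f
    _ = ‖T‖ := by rw [hf, mul_one]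

private lemma supSet_nonneg (T : E →L[ℂ] F) {n : ℕ} (g : Fin n → E) :
    0 ≤ sSup { s : ℝ | ∃ f : E, (∀ i, (inner ℂ (g i) f : ℂ) = 0) ∧ ‖f‖ = 1 ∧ s = ‖T f‖ } := by
  refine Real.sSup_nonneg ?_
  rintro s ⟨f, -, -, rfl⟩
  positivity

private lemma infSet_bddBelow (T : E →L[ℂ] F) (n : ℕ) :
    BddBelow { r : ℝ | ∃ g : Fin n → E,
      r = sSup { s : ℝ | ∃ f : E, (∀ i, (inner ℂ (g i) f : ℂ) = 0) ∧ ‖f‖ = 1 ∧ s = ‖T f‖ } } := by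
  refine ⟨0, ?_⟩
  rintro r ⟨g, rfl⟩
  exact supSet_nonneg T g

private lemma singularValue_nonneg (T : E →L[ℂ] F) (n : ℕ) : 0 ≤ singularValue T n := by
  refine Real.sInf_nonneg ?_
  rintro r ⟨g, rfl⟩
  exact supSet_nonneg T g

private lemma exists_good (T : E →L[ℂ] F) (n : ℕ) {ε : ℝ} (hε : 0 < ε) :
    ∃ g : Fin n → E,
      sSup { s : ℝ | ∃ f : E, (∀ i, (inner ℂ (g i) f : ℂ) = 0) ∧ ‖f‖ = 1 ∧ s = ‖T f‖ }
        < singularValue T n + ε := by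
  have hne : ({ r : ℝ | ∃ g : Fin n → E,
      r = sSup { s : ℝ | ∃ f : E, (∀ i, (inner ℂ (g i) f : ℂ) = 0) ∧ ‖f‖ = 1 ∧ s = ‖T f‖ } }).Nonempty :=
    ⟨_, fun _ => (0 : E), rfl⟩
  have hlt : singularValue T n < singularValue T n + ε := lt_add_of_pos_right _ hε
  obtain ⟨r, ⟨g, rfl⟩, hr⟩ := exists_lt_of_csInf_lt hne hlt
  exact ⟨g, hr⟩

end aux

theorem singularValue_comp_le (T₁ : H₁ →L[ℂ] H₂) (T₃ : H₂ →L[ℂ] H₃)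
    (hT₁ : IsCompactOperator ⇑T₁) (hT₃ : IsCompactOperator ⇑T₃) (j k : ℕ) :
    singularValue (T₃.comp T₁) (j + k) ≤ singularValue T₁ j * singularValue T₃ k := by
  have key : ∀ ε : ℝ, 0 < ε → singularValue (T₃.comp T₁) (j + k)
      ≤ (singularValue T₁ j + ε) * (singularValue T₃ k + ε) := by
    intro ε hε
    obtain ⟨g, hg⟩ := exists_good T₁ j hε
    obtain ⟨h, hh⟩ := exists_good T₃ k hε
    set A := sSup { s : ℝ | ∃ f : H₁, (∀ i, (inner ℂ (g i) f : ℂ) = 0) ∧ ‖f‖ = 1 ∧ s = ‖T₁ f‖ } with hA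
    set B := sSup { s : ℝ | ∃ f : H₂, (∀ i, (inner ℂ (h i) f : ℂ) = 0) ∧ ‖f‖ = 1 ∧ s = ‖T₃ f‖ } with hB
    have hA0 : 0 ≤ A := supSet_nonneg T₁ g
    have hB0 : 0 ≤ B := supSet_nonneg T₃ h
    set G : Fin (j + k) → H₁ := Fin.append g (fun i => ContinuousLinearMap.adjoint T₁ (h i)) with hG
    have step1 : singularValue (T₃.comp T₁) (j + k)
        ≤ sSup { s : ℝ | ∃ f : H₁, (∀ i, (inner ℂ (G i) f : ℂ) = 0) ∧ ‖f‖ = 1 ∧ s = ‖(T₃.comp T₁) f‖ } :=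
      csInf_le (infSet_bddBelow _ _) ⟨G, rfl⟩
    have step2 : sSup { s : ℝ | ∃ f : H₁, (∀ i, (inner ℂ (G i) f : ℂ) = 0) ∧ ‖f‖ = 1 ∧ s = ‖(T₃.comp T₁) f‖ }
        ≤ A * B := by
      refine Real.sSup_le ?_ (mul_nonneg hA0 hB0)
      rintro s ⟨f, hperp, hf1, rfl⟩
      have hgf : ∀ i : Fin j, (inner ℂ (g i) f : ℂ) = 0 := by
        intro i
        have := hperp (Fin.castAdd k i)
        rwa [hG, Fin.append_left] at this
      have hhf : ∀ i : Fin k, (inner ℂ (h i) (T₁ f) : ℂ) = 0 := by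
        intro i
        have := hperp (Fin.natAdd j i)
        rw [hG, Fin.append_right] at this
        rwa [ContinuousLinearMap.adjoint_inner_left] at this
      have h1 : ‖T₁ f‖ ≤ A := le_csSup (supSet_bddAbove T₁ g) ⟨f, hgf, hf1, rfl⟩
      have h2 : ‖T₃ (T₁ f)‖ ≤ B * ‖T₁ f‖ := by
        rcases eq_or_ne (T₁ f) 0 with h0 | h0
        · simp [h0]
        · have hc : (0 : ℝ) < ‖T₁ f‖ := norm_pos_iff.mpr h0
          set u : H₂ := ((‖T₁ f‖ : ℂ))⁻¹ • T₁ f with hu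
          have hu1 : ‖u‖ = 1 := by
            rw [hu, norm_smul, norm_inv, Complex.norm_real, Real.norm_eq_abs,
              abs_of_pos hc, inv_mul_cancel₀ hc.ne']
          have huperp : ∀ i : Fin k, (inner ℂ (h i) u : ℂ) = 0 := by
            intro i
            rw [hu, inner_smul_right, hhf, mul_zero]
          have h3 : ‖T₃ u‖ ≤ B := le_csSup (supSet_bddAbove T₃ h) ⟨u, huperp, hu1, rfl⟩
          have h4 : T₃ (T₁ f) = (‖T₁ f‖ : ℂ) • T₃ u := by
            rw [hu, map_smul, smul_smul, mul_inv_cancel₀ (by exact_mod_cast hc.ne'), one_smul]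
          rw [h4, norm_smul, Complex.norm_real, Real.norm_eq_abs, abs_of_pos hc, mul_comm]
          exact mul_le_mul_of_nonneg_right h3 hc.le
      calc ‖(T₃.comp T₁) f‖ = ‖T₃ (T₁ f)‖ := rfl
        _ ≤ B * ‖T₁ f‖ := h2
        _ ≤ B * A := mul_le_mul_of_nonneg_left h1 hB0
        _ = A * B := mul_comm _ _
    have step3 : A * B ≤ (singularValue T₁ j + ε) * (singularValue T₃ k + ε) :=
      mul_le_mul hg.le hh.le hB0 (le_trans hA0 hg.le)
    exact step1.trans (step2.trans step3)
  have htend : Filter.Tendsto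
      (fun ε : ℝ => (singularValue T₁ j + ε) * (singularValue T₃ k + ε))
      (nhdsWithin 0 (Set.Ioi 0)) (nhds (singularValue T₁ j * singularValue T₃ k)) := by
    have : Filter.Tendsto
        (fun ε : ℝ => (singularValue T₁ j + ε) * (singularValue T₃ k + ε))
        (nhds 0) (nhds ((singularValue T₁ j + 0) * (singularValue T₃ k + 0))) := by
      exact ((continuous_const.add continuous_id).mul (continuous_const.add continuous_id)).tendsto 0
    simpa using this.mono_left nhdsWithin_le_nhds
  exact ge_of_tendsto htend (eventually_nhdsWithin_of_forall (fun ε hε => key ε hε))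
end
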